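/- arXiv:1412.0231 — 3 statements merged into one kernel-verified Lean document; each statement's English description precedes it below -/
import Mathlib

section
/- Let (d_k, ..., d_0) be a 1089 (n,b)-palintiple (a symmetric (n,b)-palintiple with n+1 dividing b), with palinomial Pal(X), digit polynomial D(X), and reverse-digit polynomial R(X). Then the following identities hold in ℤ[X]: (n−1)·(X−b)·D(X) = (d_k·X² − X + d_0)·Pal(X) and (n−1)·(X−b)·R(X) = (d_0·X² − X + d_k)·Pal(X). -/
open Finset Polynomial

/-- `d 0, ..., d k` are the `k+1` digits (least significant first) of an
`(n,b)`-palintiple. -/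
def IsPalintiple (n b : ℤ) (k : ℕ) (d : ℕ → ℤ) : Prop :=
  1 < n ∧ n < b ∧ 1 ≤ k ∧
  (∀ j ≤ k, 0 ≤ d j ∧ d j ≤ b - 1) ∧ d k ≠ 0 ∧ d 0 ≠ 0 ∧
  (∑ j ∈ range (k + 1), d j * b ^ j) = n * ∑ j ∈ range (k + 1), d (k - j) * b ^ j

/-- `c 0, ..., c (k+1)` are the carries of the `(n,b)`-palintiple with digits
`d 0, ..., d k`. -/
def IsCarries (n b : ℤ) (k : ℕ) (d c : ℕ → ℤ) : Prop :=
  c 0 = 0 ∧ ∀ j ≤ k, n * d (k - j) + c j = d j + b * c (j + 1)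

/-- A palintiple with carries `c` is symmetric if `c j = c (k-j)`. -/
def IsSym (k : ℕ) (c : ℕ → ℤ) : Prop := ∀ j ≤ k, c j = c (k - j)

/-- A palintiple with carries `c` is shifted-symmetric if `c j = c (k-j+1)`. -/
def IsShiftedSym (k : ℕ) (c : ℕ → ℤ) : Prop := ∀ j ≤ k, c j = c (k - j + 1)

/-- A palintiple is asymmetric if it is neither symmetric nor shifted-symmetric. -/
def IsAsym (k : ℕ) (c : ℕ → ℤ) : Prop := ¬ IsSym k c ∧ ¬ IsShiftedSym k c

/-- The palinomial of the `(n,b)`-palintiple with digits `d 0, ..., d k`. -/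
noncomputable def palinomial (n : ℤ) (k : ℕ) (d : ℕ → ℤ) : Polynomial ℤ :=
  ∑ j ∈ Finset.range (k + 1), Polynomial.C (d j - n * d (k - j)) * Polynomial.X ^ j

/-- The digit polynomial of the palintiple with digits `d 0, ..., d k`. -/
noncomputable def digitPoly (k : ℕ) (d : ℕ → ℤ) : Polynomial ℤ :=
  ∑ j ∈ Finset.range (k + 1), Polynomial.C (d j) * Polynomial.X ^ j

/-- The reverse-digit polynomial of the palintiple with digits `d 0, ..., d k`. -/
noncomputable def revDigitPoly (k : ℕ) (d : ℕ → ℤ) : Polynomial ℤ :=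
  ∑ j ∈ Finset.range (k + 1), Polynomial.C (d (k - j)) * Polynomial.X ^ j

/-!
The carries `c` govern everything.  The recurrence `d_j - n d_{k-j} = c_j - b c_{j+1}`, with
`c_0 = c_{k+1} = 0`, says `Pal = D - nR = (X - b) S` for the carry polynomial
`S = ∑ c_{j+1} X^j`; read at `k - j` and combined with the symmetry `c_j = c_{k-j}` it gives
`R - nD = (X - bX²) S`.  Solving this linear system with `b = (n+1)m` yields
`(n-1) D = (nm X² - X + m) S` and `(n-1) R = (m X² - X + nm) S`.  The quadratic factor is
primitive (its linear coefficient is `-1`), so by Gauss's lemma `n - 1` divides every coefficient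
of `S`; comparing constant terms and using `n d_0 = d_k < b` then forces `d_0 = m`, `d_k = nm`.
-/

theorem Polynomial.isPrimitive_of_isUnit_coeff {R : Type*} [CommSemiring R] {p : R[X]} {i : ℕ}
    (hi : IsUnit (p.coeff i)) : p.IsPrimitive :=
  isPrimitive_iff_isUnit_of_C_dvd.mpr fun _ hr =>
    isUnit_of_dvd_unit (C_dvd_iff_dvd_coeff _ _ |>.mp hr i) hi

theorem Polynomial.dvd_coeff_of_C_mul_eq_mul {R : Type*} [CommRing R]
    [StrongNormalizedGCDMonoid R] {a : R} {p f q : R[X]} (hf : f.IsPrimitive) (h : C a * p = f * q)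
    (i : ℕ) : a ∣ q.coeff i := by
  have hcont := congrArg content h
  rw [content_C_mul, content_mul, hf.content_eq_one, one_mul] at hcont
  exact (normalize_dvd_iff.mp ⟨_, hcont.symm⟩).trans (content_dvd_coeff i)

theorem IsCarries.carry_succ_eq_zero {n b : ℤ} {k : ℕ} {d c : ℕ → ℤ} (hc : IsCarries n b k d c)
    (hb : b ≠ 0)
    (hsum : ∑ j ∈ range (k + 1), d j * b ^ j = n * ∑ j ∈ range (k + 1), d (k - j) * b ^ j) :
    c (k + 1) = 0 := by
  have htel : ∑ j ∈ range (k + 1), (c j * b ^ j - c (j + 1) * b ^ (j + 1)) =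
      ∑ j ∈ range (k + 1), d j * b ^ j - n * ∑ j ∈ range (k + 1), d (k - j) * b ^ j := by
    rw [mul_sum, ← sum_sub_distrib]
    refine sum_congr rfl fun j hj => ?_
    linear_combination b ^ j * hc.2 j (Nat.lt_succ_iff.mp (mem_range.mp hj))
  rw [sum_range_sub', hsum, sub_self, hc.1, zero_mul, zero_sub, neg_eq_zero] at htel
  exact (mul_eq_zero.mp htel).resolve_right (pow_ne_zero _ hb)

noncomputable def carryPoly (k : ℕ) (c : ℕ → ℤ) : ℤ[X] :=
  ∑ j ∈ range k, C (c (j + 1)) * X ^ j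

section carryPoly

variable {k : ℕ} {c : ℕ → ℤ}

theorem IsSym.last_eq_zero (hsym : IsSym k c) (hc0 : c 0 = 0) : c k = 0 := by
  simpa [hc0] using (hsym 0 k.zero_le).symm

theorem X_mul_carryPoly (hc0 : c 0 = 0) :
    X * carryPoly k c = ∑ j ∈ range (k + 1), C (c j) * X ^ j := by
  rw [carryPoly, mul_sum, sum_range_succ', hc0, C_0, zero_mul, add_zero]
  exact sum_congr rfl fun j _ => by ring

theorem carryPoly_eq_sum_succ (hck : c (k + 1) = 0) :
    carryPoly k c = ∑ j ∈ range (k + 1), C (c (j + 1)) * X ^ j := by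
  rw [sum_range_succ, hck, C_0, zero_mul, add_zero, carryPoly]

theorem X_sq_mul_carryPoly (hsym : IsSym k c) (hc0 : c 0 = 0) (hck : c (k + 1) = 0) :
    X ^ 2 * carryPoly k c = ∑ j ∈ range (k + 1), C (c (k - j + 1)) * X ^ j := by
  have hshift : ∀ j ∈ range k, C (c (k - (j + 1) + 1)) * X ^ (j + 1) = X * (C (c j) * X ^ j) := by
    intro j hj
    rw [show k - (j + 1) + 1 = k - j by grind, ← hsym j (by grind)]
    ring
  rw [sum_range_succ', Nat.sub_zero, hck, C_0, zero_mul, add_zero, sum_congr rfl hshift,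
    ← mul_sum, pow_two, mul_assoc, X_mul_carryPoly hc0, sum_range_succ, hsym.last_eq_zero hc0, C_0,
    zero_mul, add_zero]

end carryPoly

section palintiple

variable {n b : ℤ} {k : ℕ} {d c : ℕ → ℤ}

theorem digitPoly_sub_C_mul_revDigitPoly :
    digitPoly k d - C n * revDigitPoly k d = palinomial n k d := by
  rw [digitPoly, revDigitPoly, palinomial, mul_sum, ← sum_sub_distrib]
  exact sum_congr rfl fun j _ => by rw [C_sub, C_mul]; ring

theorem palinomial_eq_X_sub_C_mul_carryPoly (hc : IsCarries n b k d c) (hck : c (k + 1) = 0) :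
    palinomial n k d = (X - C b) * carryPoly k c := by
  have hterm : ∀ j ∈ range (k + 1),
      C (d j - n * d (k - j)) * X ^ j = C (c j) * X ^ j - C b * (C (c (j + 1)) * X ^ j) := by
    intro j hj
    rw [show d j - n * d (k - j) = c j - b * c (j + 1) by
      linarith [hc.2 j (Nat.lt_succ_iff.mp (mem_range.mp hj))], C_sub, C_mul]
    ring
  rw [palinomial, sum_congr rfl hterm, sum_sub_distrib, ← mul_sum, ← carryPoly_eq_sum_succ hck,
    ← X_mul_carryPoly hc.1]
  ring

theorem revDigitPoly_sub_C_mul_digitPoly (hc : IsCarries n b k d c) (hsym : IsSym k c)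
    (hck : c (k + 1) = 0) :
    revDigitPoly k d - C n * digitPoly k d = (X - C b * X ^ 2) * carryPoly k c := by
  have hterm : ∀ j ∈ range (k + 1), C (d (k - j)) * X ^ j - C n * (C (d j) * X ^ j) =
      C (c j) * X ^ j - C b * (C (c (k - j + 1)) * X ^ j) := by
    intro j hj
    have hj : j ≤ k := Nat.lt_succ_iff.mp (mem_range.mp hj)
    have hrec := hc.2 (k - j) (Nat.sub_le k j)
    rw [Nat.sub_sub_self hj] at hrec
    rw [hsym j hj, show d (k - j) = n * d j + c (k - j) - b * c (k - j + 1) by linarith,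
      C_sub, C_add, C_mul, C_mul]
    ring
  rw [revDigitPoly, digitPoly, mul_sum, ← sum_sub_distrib, sum_congr rfl hterm, sum_sub_distrib,
    ← mul_sum, ← X_sq_mul_carryPoly hsym hc.1 hck, ← X_mul_carryPoly hc.1]
  ring

theorem digitPoly_coeff_zero : (digitPoly k d).coeff 0 = d 0 := by
  simp [digitPoly, coeff_X_pow]

end palintiple

theorem sub_one_mul_eq_of_sub_C_mul_eq {R : Type*} [CommRing R] [IsDomain R] {n m : R}
    {D E S : R[X]} (hn : n + 1 ≠ 0) (hDE : D - C n * E = (X - C ((n + 1) * m)) * S)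
    (hED : E - C n * D = (X - C ((n + 1) * m) * X ^ 2) * S) :
    C (n - 1) * D = (C (n * m) * X ^ 2 - X + C m) * S ∧
      C (n - 1) * E = (C m * X ^ 2 - X + C (n * m)) * S := by
  have hCn : (C (n + 1) : R[X]) ≠ 0 := C_ne_zero.mpr hn
  simp only [C_mul, C_add, C_sub, C_1] at hDE hED hCn ⊢
  constructor
  · refine mul_left_cancel₀ hCn ?_
    linear_combination -hDE - C n * hED
  · refine mul_left_cancel₀ hCn ?_
    linear_combination -C n * hDE - hED

theorem eq_of_sub_one_mul_eq_mul_of_dvd {n m x s : ℤ} (hn : 1 < n) (hx : 0 < x)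
    (hxm : n * x < (n + 1) * m) (h : (n - 1) * x = m * s) (hs : n - 1 ∣ s) : x = m := by
  obtain ⟨t, rfl⟩ := hs
  have hxt : x = m * t := mul_left_cancel₀ (sub_ne_zero.mpr hn.ne') (by linear_combination h)
  subst hxt
  have hm : 0 < m := by nlinarith
  have ht : 0 < t := pos_of_mul_pos_right hx hm.le
  have hnt : n * t < n + 1 := lt_of_mul_lt_mul_left (by linear_combination hxm) hm.le
  have ht1 : t ≤ 1 := by nlinarith
  rw [show t = 1 by omega, mul_one]

/-- **Theorem.** For a 1089 `(n,b)`-palintiple,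
`(n-1)(X-b)·D(X) = (d_k X² - X + d_0)·Pal(X)` and
`(n-1)(X-b)·R(X) = (d_0 X² - X + d_k)·Pal(X)` in `ℤ[X]`. -/
theorem digit_poly_factorization_1089 (n b : ℤ) (k : ℕ) (d c : ℕ → ℤ)
    (hp : IsPalintiple n b k d) (hc : IsCarries n b k d c)
    (hsym : IsSym k c) (hdvd : n + 1 ∣ b) :
    C (n - 1) * (X - C b) * digitPoly k d =
      (C (d k) * X ^ 2 - X + C (d 0)) * palinomial n k d ∧
    C (n - 1) * (X - C b) * revDigitPoly k d =
      (C (d 0) * X ^ 2 - X + C (d k)) * palinomial n k d := by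
  obtain ⟨hn, hnb, -, hdig, -, hd0, hsum⟩ := hp
  have hck : c (k + 1) = 0 := hc.carry_succ_eq_zero (by omega) hsum
  have hdk : d k = n * d 0 := by
    have hrec := hc.2 k le_rfl
    rw [Nat.sub_self, hsym.last_eq_zero hc.1, hck] at hrec
    linarith
  have hPal := palinomial_eq_X_sub_C_mul_carryPoly hc hck
  obtain ⟨m, rfl⟩ := hdvd
  obtain ⟨hD, hR⟩ := sub_one_mul_eq_of_sub_C_mul_eq (by omega)
    (digitPoly_sub_C_mul_revDigitPoly.trans hPal) (revDigitPoly_sub_C_mul_digitPoly hc hsym hck)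
  have hf : (C (n * m) * X ^ 2 - X + C m).IsPrimitive :=
    isPrimitive_of_isUnit_coeff (i := 1) <| by
      simp only [coeff_add, coeff_sub, coeff_C_mul, coeff_X_pow, coeff_X_one, coeff_C]
      norm_num
  have hconst := congrArg (coeff · 0) hD
  simp only [mul_coeff_zero, digitPoly_coeff_zero] at hconst
  have hd0m : d 0 = m := eq_of_sub_one_mul_eq_mul_of_dvd hn
    (lt_of_le_of_ne (hdig 0 k.zero_le).1 (Ne.symm hd0))
    (by linarith [(hdig k le_rfl).2]) (by simpa using hconst) (dvd_coeff_of_C_mul_eq_mul hf hD 0)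
  rw [hdk, hd0m, hPal]
  exact ⟨by linear_combination (X - C ((n + 1) * m)) * hD,
    by linear_combination (X - C ((n + 1) * m)) * hR⟩
end

section
/- Let p = (d_k, ..., d_0) be an (n,b)-palintiple with palinomial Pal(X), and let p̂ be an (n̂,b̂)-palintiple with palinomial Pal̂(X) that is either singly-derived from p (p̂ has k+2 digits and its carries satisfy ĉ_0 = 0 and ĉ_j = d_{j−1} for 1 ≤ j ≤ k+1) or doubly-derived from p (p̂ has k+3 digits and its carries satisfy ĉ_0 = 0, ĉ_j = d_{j−1} for 1 ≤ j ≤ k+1, and ĉ_{k+2} = 0). If p is a 1089 palintiple (symmetric with n+1 dividing b), then in ℤ[X]: (n−1)·(X−b)·Pal̂(X) = (X−b̂)·(d_k·X² − X + d_0)·Pal(X). If p is shifted-symmetric with carries c_0, ..., c_{k+1}, then in ℤ[X]: c_k·(X−b)·Pal̂(X) = (X−b̂)·(d_k·X + d_0)·Pal(X). -/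
open Finset Polynomial

/-!
The carry recurrence says `d j - n * d (k - j) = c j - b * c (j + 1)`, so the palinomial is
`(X - b) * R` with `R = ∑ c (j + 1) X ^ j`. For a derived palintiple `p̂` this carry polynomial
is the digit polynomial `D` of `p`, so both identities reduce to relations between `D` and `R`,
which hold coefficientwise after adding the recurrences at `j` and `k - j` and using the
(shifted) symmetry of the carries. In the 1089 case, with `b = (n + 1) m`, this gives
`(n - 1) D = (n m X ^ 2 - X + m) R`. The quadratic factor is primitive (its linear coefficient is
`-1`), so by Gauss's lemma `n - 1 ∣ c 1`; the bounds `0 < c 1 < n` then force `c 1 = n - 1`,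
that is `d 0 = m` and `d k = n m`.
-/

theorem Polynomial.IsPrimitive.C_dvd_of_C_dvd_mul {R : Type*} [CommRing R] [IsDomain R]
    [NormalizedGCDMonoid R] {f q : R[X]} {a : R} (hf : f.IsPrimitive) (h : C a ∣ f * q) :
    C a ∣ q := by
  rw [← dvd_content_iff_C_dvd] at h ⊢
  exact h.trans ((associated_content_mul f q).dvd.trans (by rw [hf.content_eq_one, one_mul]))

section digitPoly

variable {k : ℕ} {a a' : ℕ → ℤ}

theorem digitPoly_congr (h : ∀ j ≤ k, a j = a' j) : digitPoly k a = digitPoly k a' :=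
  sum_congr rfl fun j hj => by rw [h j (Nat.lt_succ_iff.mp (mem_range.mp hj))]

theorem digitPoly_add : digitPoly k (fun j => a j + a' j) = digitPoly k a + digitPoly k a' := by
  simp only [digitPoly, map_add, add_mul, sum_add_distrib]

theorem digitPoly_sub : digitPoly k (fun j => a j - a' j) = digitPoly k a - digitPoly k a' := by
  simp only [digitPoly, map_sub, sub_mul, sum_sub_distrib]

theorem digitPoly_mul_left (r : ℤ) : digitPoly k (fun j => r * a j) = C r * digitPoly k a := by
  simp only [digitPoly, map_mul, mul_sum, mul_assoc]

theorem coeff_digitPoly_zero : (digitPoly k a).coeff 0 = a 0 := by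
  simp [digitPoly]

theorem digitPoly_succ_of_eq_zero (h : a (k + 1) = 0) : digitPoly (k + 1) a = digitPoly k a := by
  rw [digitPoly, sum_range_succ, h, map_zero, zero_mul, add_zero, digitPoly]

theorem X_mul_digitPoly_succ (h0 : a 0 = 0) (htop : a (k + 1) = 0) :
    X * digitPoly k (fun j => a (j + 1)) = digitPoly k a := by
  calc X * digitPoly k (fun j => a (j + 1))
      = ∑ j ∈ range (k + 1), C (a (j + 1)) * X ^ (j + 1) := by
        rw [digitPoly, mul_sum]; exact sum_congr rfl fun j _ => by ring
    _ = digitPoly (k + 1) a := by rw [digitPoly, sum_range_succ' _ (k + 1), h0]; simp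
    _ = digitPoly k a := digitPoly_succ_of_eq_zero htop

theorem digitPoly_derived_carries {kh : ℕ} {d ch : ℕ → ℤ}
    (hkh : kh = k + 1 ∨ kh = k + 2 ∧ ch (k + 2) = 0)
    (hchd : ∀ j, 1 ≤ j → j ≤ k + 1 → ch j = d (j - 1)) (htop : ch (kh + 1) = 0) :
    digitPoly kh (fun j => ch (j + 1)) = digitPoly k d := by
  have hd : digitPoly k (fun j => ch (j + 1)) = digitPoly k d :=
    digitPoly_congr fun j hj => hchd (j + 1) (by omega) (by omega)
  rcases hkh with rfl | ⟨rfl, h2⟩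
  · rw [digitPoly_succ_of_eq_zero (a := fun j => ch (j + 1)) htop, hd]
  · rw [digitPoly_succ_of_eq_zero (a := fun j => ch (j + 1)) htop,
      digitPoly_succ_of_eq_zero (a := fun j => ch (j + 1)) h2, hd]

end digitPoly

namespace IsCarries

variable {n b : ℤ} {k : ℕ} {d c : ℕ → ℤ}

theorem carry_succ_eq_zero_s16 (hc : IsCarries n b k d c) (hp : IsPalintiple n b k d) :
    c (k + 1) = 0 := by
  obtain ⟨hn, hnb, -, -, -, -, hsum⟩ := hp
  have htel : ∑ j ∈ range (k + 1), (c j * b ^ j - c (j + 1) * b ^ (j + 1)) = 0 := by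
    calc _ = ∑ j ∈ range (k + 1), (d j * b ^ j - n * (d (k - j) * b ^ j)) :=
          sum_congr rfl fun j hj => by
            linear_combination b ^ j * hc.2 j (Nat.lt_succ_iff.mp (mem_range.mp hj))
      _ = 0 := by rw [sum_sub_distrib, ← mul_sum, hsum, sub_self]
  rw [sum_range_sub' (fun j => c j * b ^ j), hc.1, zero_mul, zero_sub, neg_eq_zero] at htel
  exact (mul_eq_zero.mp htel).resolve_right (pow_ne_zero _ (by omega))

theorem palinomial_eq (hc : IsCarries n b k d c) (htop : c (k + 1) = 0) :
    palinomial n k d = (X - C b) * digitPoly k (fun j => c (j + 1)) := by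
  have hpal : palinomial n k d = digitPoly k (fun j => c j - b * c (j + 1)) :=
    digitPoly_congr fun j hj => by linear_combination -hc.2 j hj
  rw [hpal, digitPoly_sub, digitPoly_mul_left, ← X_mul_digitPoly_succ hc.1 htop, sub_mul]

theorem carry_last_eq_zero_of_sym (hc : IsCarries n b k d c) (hsym : IsSym k c) : c k = 0 := by
  simpa [hc.1] using (hsym 0 (Nat.zero_le k)).symm

/-- At `j = 0` the term `c (j - 1)` is `c 0 = 0`, by truncated subtraction. -/
theorem sq_sub_one_mul_digit_of_sym (hc : IsCarries n b k d c) (hsym : IsSym k c)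
    (htop : c (k + 1) = 0) {j : ℕ} (hj : j ≤ k) :
    (n ^ 2 - 1) * d j = b * c (j + 1) - (n + 1) * c j + n * b * c (j - 1) := by
  have hmirror := hc.2 (k - j) (Nat.sub_le k j)
  have hprev : c (k - j + 1) = c (j - 1) := by
    rcases Nat.eq_zero_or_pos j with rfl | hj0
    · rw [Nat.sub_zero, htop, Nat.zero_sub, hc.1]
    · rw [hsym (j - 1) (by omega), show k - (j - 1) = k - j + 1 by omega]
  rw [Nat.sub_sub_self hj, ← hsym j hj, hprev] at hmirror
  linear_combination hc.2 j hj + n * hmirror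

theorem sq_sub_one_mul_digit_of_shiftedSym (hc : IsCarries n b k d c) (hsh : IsShiftedSym k c)
    {j : ℕ} (hj : j ≤ k) :
    (n ^ 2 - 1) * d j = (b - n) * c (j + 1) + (n * b - 1) * c j := by
  have hmirror := hc.2 (k - j) (Nat.sub_le k j)
  have hnext := hsh (k - j) (Nat.sub_le k j)
  rw [Nat.sub_sub_self hj] at hmirror hnext
  rw [hnext, ← hsh j hj] at hmirror
  linear_combination hc.2 j hj + n * hmirror

theorem sub_one_mul_digit_of_sym (hc : IsCarries n b k d c) (hsym : IsSym k c)
    (htop : c (k + 1) = 0) {m : ℤ} (hm : b = (n + 1) * m) (hn : n + 1 ≠ 0) {j : ℕ}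
    (hj : j ≤ k) :
    (n - 1) * d j = n * m * c (j - 1) - c j + m * c (j + 1) :=
  mul_left_cancel₀ hn (by
    linear_combination hc.sq_sub_one_mul_digit_of_sym hsym htop hj +
      (n * c (j - 1) + c (j + 1)) * hm)

theorem C_mul_digitPoly_of_sym (hc : IsCarries n b k d c) (hsym : IsSym k c)
    (htop : c (k + 1) = 0) {m : ℤ} (hm : b = (n + 1) * m) (hn : n + 1 ≠ 0) :
    C (n - 1) * digitPoly k d =
      (C (n * m) * X ^ 2 - X + C m) * digitPoly k (fun j => c (j + 1)) := by
  have hX : X * digitPoly k (fun j => c (j + 1)) = digitPoly k c := X_mul_digitPoly_succ hc.1 htop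
  have hX2 : X * digitPoly k c = digitPoly k (fun j => c (j - 1)) :=
    X_mul_digitPoly_succ (a := fun j => c (j - 1)) hc.1 (hc.carry_last_eq_zero_of_sym hsym)
  calc C (n - 1) * digitPoly k d
      = digitPoly k (fun j => n * m * c (j - 1) - c j + m * c (j + 1)) := by
        rw [← digitPoly_mul_left]
        exact digitPoly_congr fun j hj => hc.sub_one_mul_digit_of_sym hsym htop hm hn hj
    _ = _ := by
        rw [digitPoly_add, digitPoly_sub, digitPoly_mul_left, digitPoly_mul_left, ← hX2, ← hX]
        ring

theorem C_mul_digitPoly_of_shiftedSym (hc : IsCarries n b k d c) (hsh : IsShiftedSym k c)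
    (htop : c (k + 1) = 0) (hk : 1 ≤ k) (hn : n ^ 2 - 1 ≠ 0) :
    C (c k) * digitPoly k d = (C (d k) * X + C (d 0)) * digitPoly k (fun j => c (j + 1)) := by
  have hfirst := hc.sq_sub_one_mul_digit_of_shiftedSym hsh (Nat.zero_le k)
  have hlast := hc.sq_sub_one_mul_digit_of_shiftedSym hsh le_rfl
  rw [hc.1, zero_add, show c 1 = c k by simpa [Nat.sub_add_cancel hk] using hsh 1 hk] at hfirst
  rw [htop] at hlast
  have hcoeff : ∀ j ≤ k, c k * d j = d k * c j + d 0 * c (j + 1) := fun j hj =>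
    mul_left_cancel₀ hn (by
      linear_combination
        c k * hc.sq_sub_one_mul_digit_of_shiftedSym hsh hj - c j * hlast - c (j + 1) * hfirst)
  calc C (c k) * digitPoly k d
      = digitPoly k (fun j => d k * c j + d 0 * c (j + 1)) := by
        rw [← digitPoly_mul_left]; exact digitPoly_congr hcoeff
    _ = _ := by
        rw [digitPoly_add, digitPoly_mul_left, digitPoly_mul_left,
          ← X_mul_digitPoly_succ hc.1 htop]
        ring

end IsCarries

namespace IsPalintiple

variable {n b : ℤ} {k : ℕ} {d c : ℕ → ℤ}

theorem carry_one_eq_of_sym (hp : IsPalintiple n b k d) (hc : IsCarries n b k d c)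
    (hsym : IsSym k c) {m : ℤ} (hm : b = (n + 1) * m) : c 1 = n - 1 := by
  have htop := hc.carry_succ_eq_zero_s16 hp
  obtain ⟨hn, hnb, -, hdig, -, hd0, -⟩ := hp
  have hpoly := hc.C_mul_digitPoly_of_sym hsym htop hm (by omega)
  have hprim : (C (n * m) * X ^ 2 - X + C m).IsPrimitive :=
    isPrimitive_iff_isUnit_of_C_dvd.2 fun r hr =>
      isUnit_of_dvd_unit ((C_dvd_iff_dvd_coeff _ _).1 hr 1) (by
        simp only [coeff_add, coeff_sub, coeff_C_mul, coeff_X_pow, coeff_X_one, coeff_C]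
        norm_num)
  have hdvd : n - 1 ∣ c 1 := by
    have h := (C_dvd_iff_dvd_coeff _ _).1 (hprim.C_dvd_of_C_dvd_mul ⟨_, hpoly.symm⟩) 0
    rwa [coeff_digitPoly_zero] at h
  have hfirst := hc.sub_one_mul_digit_of_sym hsym htop hm (by omega) (Nat.zero_le k)
  have hlead := hc.2 0 (Nat.zero_le k)
  simp only [Nat.zero_sub, Nat.sub_zero, hc.1, zero_add, add_zero, mul_zero, sub_zero]
    at hfirst hlead
  have hd0pos : 1 ≤ d 0 := by have := (hdig 0 (Nat.zero_le k)).1; omega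
  have hdk := (hdig k le_rfl).2
  have hm0 : 0 < m := by nlinarith
  have hpos : 0 < c 1 := by nlinarith
  have hlt : c 1 < n := by nlinarith
  have := Int.le_of_dvd hpos hdvd
  omega

theorem C_mul_digitPoly_of_sym (hp : IsPalintiple n b k d) (hc : IsCarries n b k d c)
    (hsym : IsSym k c) (hdvd : n + 1 ∣ b) :
    C (n - 1) * digitPoly k d =
      (C (d k) * X ^ 2 - X + C (d 0)) * digitPoly k (fun j => c (j + 1)) := by
  obtain ⟨m, hm⟩ := hdvd
  have htop := hc.carry_succ_eq_zero_s16 hp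
  have hn : n + 1 ≠ 0 := by have := hp.1; omega
  have hfirst := hc.sub_one_mul_digit_of_sym hsym htop hm hn (Nat.zero_le k)
  have hlast := hc.2 k le_rfl
  rw [Nat.zero_sub, hc.1, hp.carry_one_eq_of_sym hc hsym hm] at hfirst
  rw [Nat.sub_self, hc.carry_last_eq_zero_of_sym hsym, htop] at hlast
  have hd0 : d 0 = m := mul_left_cancel₀ (by have := hp.1; omega : n - 1 ≠ 0) (by linarith)
  rw [show d k = n * m by linarith, hd0]
  exact hc.C_mul_digitPoly_of_sym hsym htop hm hn

end IsPalintiple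

/-- **Corollary.** The palinomial of a singly- or doubly-derived palintiple `p̂`
(carry sequence `(d k, ..., d 0, 0)` resp. `(0, d k, ..., d 0, 0)`) factors through
the palinomial of the original palintiple `p`. -/
theorem derived_palinomial_factorization (n b : ℤ) (k : ℕ) (d c : ℕ → ℤ)
    (hp : IsPalintiple n b k d) (hc : IsCarries n b k d c)
    (nh bh : ℤ) (kh : ℕ) (dh ch : ℕ → ℤ)
    (hph : IsPalintiple nh bh kh dh) (hch : IsCarries nh bh kh dh ch)
    (hder :
      (kh = k + 1 ∧ ch 0 = 0 ∧ (∀ j, 1 ≤ j → j ≤ k + 1 → ch j = d (j - 1))) ∨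
      (kh = k + 2 ∧ ch 0 = 0 ∧ (∀ j, 1 ≤ j → j ≤ k + 1 → ch j = d (j - 1)) ∧
        ch (k + 2) = 0)) :
    (IsSym k c ∧ n + 1 ∣ b →
      C (n - 1) * (X - C b) * palinomial nh kh dh =
        (X - C bh) * (C (d k) * X ^ 2 - X + C (d 0)) * palinomial n k d) ∧
    (IsShiftedSym k c →
      C (c k) * (X - C b) * palinomial nh kh dh =
        (X - C bh) * (C (d k) * X + C (d 0)) * palinomial n k d) := by
  obtain ⟨hkh, hchd⟩ : (kh = k + 1 ∨ kh = k + 2 ∧ ch (k + 2) = 0) ∧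
      ∀ j, 1 ≤ j → j ≤ k + 1 → ch j = d (j - 1) := by
    rcases hder with ⟨h1, -, h2⟩ | ⟨h1, -, h2, h3⟩
    exacts [⟨.inl h1, h2⟩, ⟨.inr ⟨h1, h3⟩, h2⟩]
  have htop := hc.carry_succ_eq_zero_s16 hp
  have htoph := hch.carry_succ_eq_zero_s16 hph
  rw [hc.palinomial_eq htop, hch.palinomial_eq htoph, digitPoly_derived_carries hkh hchd htoph]
  refine ⟨fun ⟨hsym, hdvd⟩ => ?_, fun hsh => ?_⟩
  · linear_combination (X - C b) * (X - C bh) * hp.C_mul_digitPoly_of_sym hc hsym hdvd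
  · have hn : n ^ 2 - 1 ≠ 0 := by nlinarith [hp.1]
    linear_combination (X - C b) * (X - C bh) *
      hc.C_mul_digitPoly_of_shiftedSym hsh htop hp.2.2.1 hn
end

section
/- Let p = (d_k, ..., d_0) be an (n,b)-palintiple that is either a 1089 palintiple (symmetric with n+1 dividing b) or shifted-symmetric. Let p̂₁ be a (k+2)-digit (n̂₁, b̂₁)-palintiple and p̂₂ a (k+2)-digit (n̂₂, b̂₂)-palintiple, both singly-derived from p, i.e., the carries of each satisfy ĉ_0 = 0 and ĉ_j = d_{j−1} for 1 ≤ j ≤ k+1. Then their palinomials differ by only a linear factor: in ℤ[X], (X − b̂₂)·Pal̂₁(X) = (X − b̂₁)·Pal̂₂(X), where Pal̂₁ and Pal̂₂ are the palinomials of p̂₁ and p̂₂. -/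
open Finset Polynomial

def IsSinglyDerived (k : ℕ) (d ch : ℕ → ℤ) : Prop :=
  ch 0 = 0 ∧ ∀ j, 1 ≤ j → j ≤ k + 1 → ch j = d (j - 1)

lemma IsCarries.palinomial_eq_s19 {n b : ℤ} {k : ℕ} {d c : ℕ → ℤ} (hc : IsCarries n b k d c) :
    palinomial n k d =
      (X - C b) * ∑ j ∈ range (k + 1), C (c (j + 1)) * X ^ j - C (c (k + 1)) * X ^ (k + 1) := by
  obtain ⟨hc0, hrec⟩ := hc
  have hterm : palinomial n k d =
      ∑ j ∈ range (k + 1), C (c j) * X ^ j - C b * ∑ j ∈ range (k + 1), C (c (j + 1)) * X ^ j := by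
    rw [palinomial, mul_sum, ← sum_sub_distrib]
    refine sum_congr rfl fun j hj => ?_
    have hjk := hrec j (Nat.lt_succ_iff.mp (mem_range.mp hj))
    rw [show d j - n * d (k - j) = c j - b * c (j + 1) by linarith]
    simp only [map_sub, map_mul]
    ring
  have hshift : ∑ j ∈ range (k + 1), C (c j) * X ^ j + C (c (k + 1)) * X ^ (k + 1) =
      X * ∑ j ∈ range (k + 1), C (c (j + 1)) * X ^ j := by
    rw [← sum_range_succ (fun j => C (c j) * X ^ j), sum_range_succ', hc0, mul_sum]
    simp only [map_zero, zero_mul, add_zero, pow_succ]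
    exact sum_congr rfl fun j _ => by ring
  rw [hterm, ← sub_eq_iff_eq_add.mpr hshift.symm]
  ring

lemma IsPalintiple.eval_palinomial {n b : ℤ} {k : ℕ} {d : ℕ → ℤ} (hp : IsPalintiple n b k d) :
    (palinomial n k d).eval b = 0 := by
  obtain ⟨-, -, -, -, -, -, hsum⟩ := hp
  simp only [palinomial, eval_finsetSum, eval_mul, eval_C, eval_pow, eval_X, sub_mul,
    sum_sub_distrib, mul_assoc, ← mul_sum]
  exact sub_eq_zero.mpr hsum

lemma IsCarries.last_eq_zero {n b : ℤ} {k : ℕ} {d c : ℕ → ℤ} (hp : IsPalintiple n b k d)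
    (hc : IsCarries n b k d c) : c (k + 1) = 0 := by
  have hb : b ≠ 0 := by obtain ⟨hn, hnb, -⟩ := hp; omega
  have h := hp.eval_palinomial
  rw [hc.palinomial_eq_s19] at h
  simpa [hb] using h

lemma IsSinglyDerived.palinomial_eq_s19 {k : ℕ} {d : ℕ → ℤ} {nh bh : ℤ} {dh ch : ℕ → ℤ}
    (hp : IsPalintiple nh bh (k + 1) dh) (hc : IsCarries nh bh (k + 1) dh ch)
    (hder : IsSinglyDerived k d ch) :
    palinomial nh (k + 1) dh = (X - C bh) * digitPoly k d := by
  have hcarries : ∑ j ∈ range (k + 2), C (ch (j + 1)) * X ^ j = digitPoly k d := by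
    rw [sum_range_succ, hc.last_eq_zero hp, map_zero, zero_mul, add_zero, digitPoly]
    refine sum_congr rfl fun j hj => ?_
    rw [hder.2 (j + 1) (by omega) (by simpa using mem_range.mp hj), Nat.add_sub_cancel]
  rw [hc.palinomial_eq_s19, hcarries, hc.last_eq_zero hp, map_zero, zero_mul, sub_zero]

theorem singly_derived_palinomials_linear_factor_general (k : ℕ) (d : ℕ → ℤ)
    (nh1 bh1 : ℤ) (dh1 ch1 : ℕ → ℤ)
    (hp1 : IsPalintiple nh1 bh1 (k + 1) dh1) (hc1 : IsCarries nh1 bh1 (k + 1) dh1 ch1)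
    (hder1 : ch1 0 = 0 ∧ ∀ j, 1 ≤ j → j ≤ k + 1 → ch1 j = d (j - 1))
    (nh2 bh2 : ℤ) (dh2 ch2 : ℕ → ℤ)
    (hp2 : IsPalintiple nh2 bh2 (k + 1) dh2) (hc2 : IsCarries nh2 bh2 (k + 1) dh2 ch2)
    (hder2 : ch2 0 = 0 ∧ ∀ j, 1 ≤ j → j ≤ k + 1 → ch2 j = d (j - 1)) :
    (X - C bh2) * palinomial nh1 (k + 1) dh1 =
      (X - C bh1) * palinomial nh2 (k + 1) dh2 := by
  rw [IsSinglyDerived.palinomial_eq_s19 hp1 hc1 hder1, IsSinglyDerived.palinomial_eq_s19 hp2 hc2 hder2]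
  ring

/-- **Corollary.** Palinomials induced by any two singly-derived palintiples
constructed from a common 1089 or shifted-symmetric palintiple differ by only a
linear factor. -/
theorem singly_derived_palinomials_linear_factor (n b : ℤ) (k : ℕ) (d c : ℕ → ℤ)
    (hp : IsPalintiple n b k d) (hc : IsCarries n b k d c)
    (hclass : (IsSym k c ∧ n + 1 ∣ b) ∨ IsShiftedSym k c)
    (nh1 bh1 : ℤ) (dh1 ch1 : ℕ → ℤ)
    (hp1 : IsPalintiple nh1 bh1 (k + 1) dh1) (hc1 : IsCarries nh1 bh1 (k + 1) dh1 ch1)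
    (hder1 : ch1 0 = 0 ∧ ∀ j, 1 ≤ j → j ≤ k + 1 → ch1 j = d (j - 1))
    (nh2 bh2 : ℤ) (dh2 ch2 : ℕ → ℤ)
    (hp2 : IsPalintiple nh2 bh2 (k + 1) dh2) (hc2 : IsCarries nh2 bh2 (k + 1) dh2 ch2)
    (hder2 : ch2 0 = 0 ∧ ∀ j, 1 ≤ j → j ≤ k + 1 → ch2 j = d (j - 1)) :
    (X - C bh2) * palinomial nh1 (k + 1) dh1 =
      (X - C bh1) * palinomial nh2 (k + 1) dh2 :=
  singly_derived_palinomials_linear_factor_general k d nh1 bh1 dh1 ch1 hp1 hc1 hder1 nh2 bh2 dh2 ch2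
    hp2 hc2 hder2
end
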